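/- Let ℒ ⊂ ℝ^d be a lattice of rank n ≥ 2, let w ∈ ℒ* be a nonzero primitive dual vector with ‖w‖ ≤ γ₂ · det(ℒ*)^{1/n} for some real γ₂ > 0, and let y be a nonzero vector of the rank-(n−1) lattice ℒ ∩ w^⊥ with ‖y‖ ≤ γ₁ · det(ℒ ∩ w^⊥)^{1/(n−1)} for some real γ₁ > 0. Then ‖y‖ ≤ γ₁ · γ₂^{1/(n−1)} · det(ℒ)^{1/n}. -/

import Mathlib

open scoped RealInnerProductSpace BigOperators

noncomputable section

/-- The set of integer linear combinations of `B 0, …, B (n-1)`. -/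
def zspan {d n : ℕ} (B : Fin n → EuclideanSpace ℝ (Fin d)) : Set (EuclideanSpace ℝ (Fin d)) :=
  {x | ∃ c : Fin n → ℤ, x = ∑ i, (c i : ℝ) • B i}

/-- `L` is a lattice of rank `n`: the ℤ-span of `n` ℝ-linearly independent vectors. -/
def IsLattice {d : ℕ} (L : Set (EuclideanSpace ℝ (Fin d))) (n : ℕ) : Prop :=
  ∃ B : Fin n → EuclideanSpace ℝ (Fin d), LinearIndependent ℝ B ∧ L = zspan B

/-- The dual set `S* := {w ∈ span_ℝ S : ⟨w,y⟩ ∈ ℤ for all y ∈ S}`. -/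
def dualSet {d : ℕ} (S : Set (EuclideanSpace ℝ (Fin d))) : Set (EuclideanSpace ℝ (Fin d)) :=
  {w | w ∈ Submodule.span ℝ S ∧ ∀ y ∈ S, ∃ m : ℤ, ⟪w, y⟫ = (m : ℝ)}

/-- Orthogonal projection onto the orthogonal complement of `span_ℝ S`. -/
def projPerp {d : ℕ} (S : Set (EuclideanSpace ℝ (Fin d))) (x : EuclideanSpace ℝ (Fin d)) : EuclideanSpace ℝ (Fin d) :=
  (Submodule.orthogonalProjectionOnto (Submodule.span ℝ S)ᗮ x : EuclideanSpace ℝ (Fin d))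

/-- `det(ℒ) = √(det(BᵀB))`, computed from a basis `B` via its Gram matrix. -/
def gramDet {d n : ℕ} (B : Fin n → EuclideanSpace ℝ (Fin d)) : ℝ :=
  Real.sqrt (Matrix.det (Matrix.of fun i j => ⟪B i, B j⟫))

/-- The Gram–Schmidt orthogonalization `b̃ᵢ = Π_{{b₁,…,b_(i-1)}^⊥}(bᵢ)`. -/
def gsVec {d n : ℕ} (B : Fin n → EuclideanSpace ℝ (Fin d)) (i : Fin n) : EuclideanSpace ℝ (Fin d) :=
  projPerp (B '' {j | j < i}) (B i)

/-- The Gram–Schmidt coefficients `μ_(i,j) = ⟨b̃ᵢ, bⱼ⟩ / ‖b̃ᵢ‖²`. -/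
def mu {d n : ℕ} (B : Fin n → EuclideanSpace ℝ (Fin d)) (i j : Fin n) : ℝ :=
  ⟪gsVec B i, B j⟫ / ‖gsVec B i‖ ^ 2

/-- `B` is an LLL-reduced basis (with parameter δ = 3/4). -/
def IsLLLReduced {d n : ℕ} (B : Fin n → EuclideanSpace ℝ (Fin d)) : Prop :=
  LinearIndependent ℝ B ∧
  (∀ i j : Fin n, i < j → |mu B i j| ≤ 1 / 2) ∧
  (∀ (i : ℕ) (h : i + 1 < n),
    (3 / 4) * ‖gsVec B ⟨i, Nat.lt_of_succ_lt h⟩‖ ^ 2 ≤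
      ‖gsVec B ⟨i + 1, h⟩‖ ^ 2 +
        (mu B ⟨i, Nat.lt_of_succ_lt h⟩ ⟨i + 1, h⟩) ^ 2 * ‖gsVec B ⟨i, Nat.lt_of_succ_lt h⟩‖ ^ 2)

/-! The values `⟪w, x⟫`, `x ∈ ℒ`, form an ideal `gℤ`; as `w / g` is again a dual vector on the line
of `w`, primitivity forces `g = ±1`, so some `u ∈ ℒ` has `⟪w, u⟫ = 1`. A basis `C` of `ℒ ∩ w^⊥`
extended by `u` is then a basis of `ℒ`, and `u` agrees with `w / ‖w‖²` modulo `span C`; hence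
`det(ℒ ∩ w^⊥) = ‖w‖ · det ℒ`. Together with `det ℒ* = (det ℒ)⁻¹`, witnessed by the dual basis
`B G⁻¹` (`G` the Gram matrix of `B`),
`‖y‖ ≤ γ₁ (‖w‖ det ℒ)^(1/(n-1)) ≤ γ₁ (γ₂ (det ℒ)^(1-1/n))^(1/(n-1)) = γ₁ γ₂^(1/(n-1)) (det ℒ)^(1/n)`.
-/

lemma Real.mul_rpow_one_div_sub_one_le {n γ s x : ℝ} (hn : 1 < n) (hγ : 0 < γ) (hs : 0 < s)
    (hx0 : 0 ≤ x) (hx : x ≤ γ * s⁻¹ ^ (1 / n)) :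
    (s * x) ^ (1 / (n - 1)) ≤ γ ^ (1 / (n - 1)) * s ^ (1 / n) := by
  have hn0 : n ≠ 0 := by positivity
  have hn1 : n - 1 ≠ 0 := sub_ne_zero.mpr hn.ne'
  calc (s * x) ^ (1 / (n - 1)) ≤ (s * (γ * s⁻¹ ^ (1 / n))) ^ (1 / (n - 1)) := by
        gcongr
    _ = (γ * s ^ (1 - 1 / n)) ^ (1 / (n - 1)) := by
        rw [Real.inv_rpow hs.le, Real.rpow_sub hs, Real.rpow_one]
        field_simp
    _ = γ ^ (1 / (n - 1)) * s ^ (1 / n) := by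
        rw [Real.mul_rpow hγ.le (by positivity), ← Real.rpow_mul hs.le]
        congr 2
        field_simp

open Matrix Submodule

namespace EuclideanLattice

section Gram

variable {V : Type*} [NormedAddCommGroup V] [InnerProductSpace ℝ V]

lemma gram_sum_smul {ι κ : Type*} [Fintype ι] (v : ι → V) (U : Matrix ι κ ℝ) :
    gram ℝ (fun k => ∑ j, U j k • v j) = Uᵀ * gram ℝ v * U := by
  ext i k
  simp only [gram_apply, mul_apply, transpose_apply, sum_inner, inner_sum, real_inner_smul_left,
    real_inner_smul_right, Finset.sum_mul]
  exact Finset.sum_congr rfl fun a _ => Finset.sum_congr rfl fun b _ => by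
    rw [real_inner_comm]; ring

lemma det_gram_sum_smul {ι : Type*} [Fintype ι] [DecidableEq ι] (v : ι → V) (U : Matrix ι ι ℝ) :
    (gram ℝ (fun k => ∑ j, U j k • v j)).det = U.det ^ 2 * (gram ℝ v).det := by
  rw [gram_sum_smul, det_mul, det_mul, det_transpose]
  ring

lemma det_gram_pos {ι : Type*} [Fintype ι] [DecidableEq ι] {v : ι → V}
    (hv : LinearIndependent ℝ v) : 0 < (gram ℝ v).det :=
  (posDef_gram_of_linearIndependent hv).det_pos

lemma det_gram_snoc_of_forall_inner_eq_zero {m : ℕ} (C : Fin m → V) {x : V}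
    (hx : ∀ i, ⟪x, C i⟫ = 0) : (gram ℝ (Fin.snoc C x)).det = (gram ℝ C).det * ‖x‖ ^ 2 := by
  rw [det_succ_row _ (Fin.last m), Finset.sum_eq_single (Fin.last m)]
  · have hminor : (gram ℝ (Fin.snoc C x)).submatrix Fin.castSucc Fin.castSucc = gram ℝ C := by
      ext i j
      simp
    simp [Fin.succAbove_last, hminor]
    ring
  · intro j _ hj
    obtain ⟨i, rfl⟩ := Fin.exists_castSucc_eq.mpr hj
    simp [hx i]
  · simp

lemma det_gram_snoc_add_sum_smul {m : ℕ} (C : Fin m → V) (x : V) (t : Fin m → ℝ) :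
    (gram ℝ (Fin.snoc C (x + ∑ i, t i • C i))).det = (gram ℝ (Fin.snoc C x)).det := by
  set U : Matrix (Fin (m + 1)) (Fin (m + 1)) ℝ :=
    (1 : Matrix _ _ ℝ).updateCol (Fin.last m) (Fin.snoc t 1)
  have hU : (Fin.snoc C (x + ∑ i, t i • C i) : Fin (m + 1) → V) =
      fun k => ∑ j, U j k • Fin.snoc C x j := by
    ext1 k
    induction k using Fin.lastCases with
    | last => simp [U, Fin.sum_univ_castSucc, add_comm]
    | cast i => simp [U, one_apply, Fin.castSucc_ne_last]
  have hdetU : U.det = 1 := by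
    have := det_updateCol_sum (1 : Matrix (Fin (m + 1)) (Fin (m + 1)) ℝ) (Fin.last m) (Fin.snoc t 1)
    simpa [one_apply] using this
  rw [hU, det_gram_sum_smul, hdetU, one_pow, one_mul]

lemma inner_eq_zero_of_mem_span {s : Set V} {w z : V} (hw : ∀ c ∈ s, ⟪w, c⟫ = 0)
    (hz : z ∈ span ℝ s) : ⟪w, z⟫ = 0 :=
  mem_orthogonal_singleton_iff_inner_right.mp
    (span_le.mpr (fun c hc => mem_orthogonal_singleton_iff_inner_right.mpr (hw c hc)) hz)

lemma eq_of_forall_inner_eq_of_mem_span {ι : Type*} {v : ι → V} {x x' : V}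
    (hx : x ∈ span ℝ (Set.range v)) (hx' : x' ∈ span ℝ (Set.range v))
    (h : ∀ j, ⟪x, v j⟫ = ⟪x', v j⟫) : x = x' := by
  have hperp : ∀ c ∈ Set.range v, ⟪x - x', c⟫ = 0 := by
    rintro _ ⟨j, rfl⟩
    rw [inner_sub_left, h j, sub_self]
  exact sub_eq_zero.mp (inner_self_eq_zero.mp (inner_eq_zero_of_mem_span hperp (sub_mem hx hx')))

lemma mem_span_of_mem_span_insert_of_inner_eq_zero {s : Set V} {w u x : V}
    (hs : ∀ c ∈ s, ⟪w, c⟫ = 0) (hu : ⟪w, u⟫ ≠ 0) (hx : x ∈ span ℝ (insert u s))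
    (hwx : ⟪w, x⟫ = 0) : x ∈ span ℝ s := by
  obtain ⟨a, z, hz, rfl⟩ := mem_span_insert.mp hx
  rw [inner_add_right, real_inner_smul_right, inner_eq_zero_of_mem_span hs hz, add_zero,
    mul_eq_zero, or_iff_left hu] at hwx
  simpa [hwx] using hz

variable {ι : Type*} [Fintype ι] [DecidableEq ι]

def dualBasis (v : ι → V) : ι → V :=
  fun k => ∑ i, (gram ℝ v)⁻¹ k i • v i

lemma dualBasis_mem_span (v : ι → V) (k : ι) : dualBasis v k ∈ span ℝ (Set.range v) :=
  sum_mem fun i _ => smul_mem _ _ (subset_span ⟨i, rfl⟩)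

lemma inner_dualBasis_left {v : ι → V} (hv : LinearIndependent ℝ v) (k j : ι) :
    ⟪dualBasis v k, v j⟫ = (1 : Matrix ι ι ℝ) k j := by
  calc ⟪dualBasis v k, v j⟫ = ((gram ℝ v)⁻¹ * gram ℝ v) k j := by
        simp only [dualBasis, sum_inner, real_inner_smul_left, mul_apply, gram_apply]
    _ = (1 : Matrix ι ι ℝ) k j := by rw [nonsing_inv_mul _ (det_gram_pos hv).ne'.isUnit]

lemma gram_dualBasis {v : ι → V} (hv : LinearIndependent ℝ v) :
    gram ℝ (dualBasis v) = ((gram ℝ v)⁻¹)ᵀ := by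
  ext i j
  change ⟪dualBasis v i, ∑ l, (gram ℝ v)⁻¹ j l • v l⟫ = (gram ℝ v)⁻¹ j i
  simp [inner_sum, real_inner_smul_right, inner_dualBasis_left hv, one_apply]

lemma det_gram_dualBasis {v : ι → V} (hv : LinearIndependent ℝ v) :
    (gram ℝ (dualBasis v)).det = ((gram ℝ v).det)⁻¹ := by
  rw [gram_dualBasis hv, det_transpose, det_nonsing_inv, Ring.inverse_eq_inv']

lemma linearIndependent_dualBasis {v : ι → V} (hv : LinearIndependent ℝ v) :
    LinearIndependent ℝ (dualBasis v) :=
  linearIndependent_of_det_gram_ne_zero (by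
    rw [det_gram_dualBasis hv]; exact inv_ne_zero (det_gram_pos hv).ne')

end Gram

section Lattice

variable {d n : ℕ}

local notation "𝔼" => EuclideanSpace ℝ (Fin d)

lemma gramDet_eq_sqrt_det_gram (B : Fin n → 𝔼) : gramDet B = √(gram ℝ B).det := rfl

lemma zspan_eq_span (B : Fin n → 𝔼) : zspan B = span ℤ (Set.range B) := by
  ext x
  simp [zspan, mem_span_range_iff_exists_fun, eq_comm, Int.cast_smul_eq_zsmul]

lemma span_real_zspan (B : Fin n → 𝔼) : span ℝ (zspan B) = span ℝ (Set.range B) := by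
  rw [zspan_eq_span, span_span_of_tower]

lemma det_gram_eq_of_zspan_eq {B B' : Fin n → 𝔼} (hB : LinearIndependent ℝ B)
    (hB' : LinearIndependent ℝ B') (h : zspan B = zspan B') :
    (gram ℝ B).det = (gram ℝ B').det := by
  rw [zspan_eq_span, zspan_eq_span, SetLike.coe_set_eq] at h
  let b := Module.Basis.span (hB.restrict_scalars' ℤ)
  let b' := (Module.Basis.span (hB'.restrict_scalars' ℤ)).map (LinearEquiv.ofEq _ _ h.symm)
  set M : Matrix (Fin n) (Fin n) ℝ := (b.toMatrix b').map (Int.cast : ℤ → ℝ)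
  have hB'_eq : B' = fun k => ∑ j, M j k • B j := by
    ext1 k
    have := congrArg Subtype.val (b.sum_repr (b' k))
    simpa [b, b', M, Module.Basis.toMatrix_apply, Int.cast_smul_eq_zsmul] using this.symm
  have hdet : M.det ^ 2 = 1 := by
    rw [show M.det = ((b.det b' : ℤ) : ℝ) by simp [M, Int.cast_det, Module.Basis.det_apply]]
    rcases Int.isUnit_iff.mp (b.isUnit_det b') with h | h <;> simp [h]
  rw [hB'_eq, det_gram_sum_smul, hdet, one_mul]

lemma mem_dualSet_zspan_iff {B : Fin n → 𝔼} {w : 𝔼} :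
    w ∈ dualSet (zspan B) ↔ w ∈ span ℝ (Set.range B) ∧ ∀ i, ∃ m : ℤ, ⟪w, B i⟫ = m := by
  rw [dualSet, Set.mem_ofPred_eq, span_real_zspan]
  refine and_congr_right fun _ => ⟨fun h i => h _ (zspan_eq_span B ▸ subset_span ⟨i, rfl⟩), ?_⟩
  rintro h _ ⟨c, rfl⟩
  choose m hm using h
  exact ⟨∑ i, c i * m i, by simp [inner_sum, real_inner_smul_right, hm]⟩

lemma dualSet_zspan {B : Fin n → 𝔼} (hB : LinearIndependent ℝ B) :
    dualSet (zspan B) = zspan (dualBasis B) := by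
  ext w
  rw [mem_dualSet_zspan_iff]
  constructor
  · rintro ⟨hw, hint⟩
    choose m hm using hint
    refine ⟨m, eq_of_forall_inner_eq_of_mem_span hw
      (sum_mem fun k _ => smul_mem _ _ (dualBasis_mem_span B k)) fun j => ?_⟩
    simp [sum_inner, real_inner_smul_left, inner_dualBasis_left hB, one_apply, hm]
  · rintro ⟨c, rfl⟩
    refine ⟨sum_mem fun k _ => smul_mem _ _ (dualBasis_mem_span B k), fun j => ⟨c j, ?_⟩⟩
    simp [sum_inner, real_inner_smul_left, inner_dualBasis_left hB, one_apply]

lemma exists_mem_zspan_inner_eq_one {B : Fin n → 𝔼} {w : 𝔼} (hw0 : w ≠ 0)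
    (hwdual : w ∈ dualSet (zspan B))
    (hwprim : {x | ∃ z : ℤ, x = (z : ℝ) • w} = dualSet (zspan B) ∩ (span ℝ {w} : Set 𝔼)) :
    ∃ u ∈ zspan B, ⟪w, u⟫ = 1 := by
  obtain ⟨hwspan, hint⟩ := mem_dualSet_zspan_iff.mp hwdual
  choose m hm using hint
  obtain ⟨g, hg⟩ := Submodule.IsPrincipal.principal (Ideal.span (Set.range m))
  obtain ⟨c, hc⟩ : ∃ c : Fin n → ℤ, ∑ i, c i • m i = g :=
    (mem_span_range_iff_exists_fun ℤ).mp
      (hg ▸ mem_span_singleton_self g : g ∈ Ideal.span (Set.range m))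
  have hdvd : ∀ i, g ∣ m i := fun i =>
    Ideal.mem_span_singleton.mp (hg ▸ Ideal.subset_span ⟨i, rfl⟩ : m i ∈ ℤ ∙ g)
  choose k hk using hdvd
  have hg0 : (g : ℝ) ≠ 0 := by
    rintro hg0
    refine hw0 (eq_of_forall_inner_eq_of_mem_span hwspan (zero_mem _) fun i => ?_)
    simp [hm, hk, Int.cast_eq_zero.mp hg0]
  have hgw : (g : ℝ)⁻¹ • w ∈ dualSet (zspan B) := by
    refine mem_dualSet_zspan_iff.mpr ⟨smul_mem _ _ hwspan, fun i => ⟨k i, ?_⟩⟩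
    rw [real_inner_smul_left, hm, hk, Int.cast_mul, inv_mul_cancel_left₀ hg0]
  obtain ⟨z, hz⟩ : (g : ℝ)⁻¹ • w ∈ {x | ∃ z : ℤ, x = (z : ℝ) • w} :=
    hwprim ▸ ⟨hgw, mem_span_singleton.mpr ⟨_, rfl⟩⟩
  have hgz : (g : ℝ) * z = 1 := by
    rw [← smul_left_injective ℝ hw0 hz, mul_inv_cancel₀ hg0]
  refine ⟨∑ i, ((z * c i : ℤ) : ℝ) • B i, ⟨_, rfl⟩, ?_⟩
  simp only [inner_sum, real_inner_smul_right, hm]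
  rw [← hgz, ← hc]
  push_cast
  simp [Finset.mul_sum, mul_comm, mul_left_comm]

lemma zspan_eq_zspan_snoc {m : ℕ} {B : Fin n → 𝔼} {C : Fin m → 𝔼} {w u : 𝔼}
    (hwdual : w ∈ dualSet (zspan B)) (hu : u ∈ zspan B) (huw : ⟪w, u⟫ = 1)
    (hBC : zspan B ∩ ((ℝ ∙ w)ᗮ : Set 𝔼) = zspan C) :
    zspan B = zspan (Fin.snoc C u) := by
  choose k hk using (mem_dualSet_zspan_iff.mp hwdual).2
  simp only [zspan_eq_span, Fin.range_snoc, SetLike.coe_set_eq] at hu hBC ⊢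
  refine le_antisymm (span_le.mpr ?_) (span_le.mpr (Set.insert_subset hu ?_))
  · rintro _ ⟨i, rfl⟩
    refine mem_span_insert.mpr ⟨k i, B i - k i • u, ?_, by abel⟩
    rw [← SetLike.mem_coe, ← hBC]
    refine ⟨sub_mem (subset_span ⟨i, rfl⟩) (zsmul_mem hu _), ?_⟩
    rw [SetLike.mem_coe, mem_orthogonal_singleton_iff_inner_right, inner_sub_right,
      ← Int.cast_smul_eq_zsmul ℝ, real_inner_smul_right, hk, huw, mul_one, sub_self]
  · rintro _ ⟨i, rfl⟩
    have : C i ∈ (span ℤ (Set.range C) : Set 𝔼) := subset_span ⟨i, rfl⟩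
    rw [← hBC] at this
    exact this.1

lemma det_gram_eq_mul_norm_sq_of_zspan_eq_inter {m : ℕ} {B : Fin n → 𝔼} {C : Fin m → 𝔼} {w : 𝔼}
    (hmn : m + 1 = n) (hB : LinearIndependent ℝ B) (hC : LinearIndependent ℝ C) (hw0 : w ≠ 0)
    (hwdual : w ∈ dualSet (zspan B))
    (hwprim : {x | ∃ z : ℤ, x = (z : ℝ) • w} = dualSet (zspan B) ∩ (span ℝ {w} : Set 𝔼))
    (hBC : zspan B ∩ ((ℝ ∙ w)ᗮ : Set 𝔼) = zspan C) :
    (gram ℝ C).det = (gram ℝ B).det * ‖w‖ ^ 2 := by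
  subst hmn
  obtain ⟨u, hu, huw⟩ := exists_mem_zspan_inner_eq_one hw0 hwdual hwprim
  have hsnoc := zspan_eq_zspan_snoc hwdual hu huw hBC
  have hCw : ∀ c ∈ Set.range C, ⟪w, c⟫ = 0 := by
    rintro _ ⟨i, rfl⟩
    have : C i ∈ zspan C := zspan_eq_span C ▸ subset_span ⟨i, rfl⟩
    exact mem_orthogonal_singleton_iff_inner_right.mp (hBC ▸ this).2
  have hu_notMem : u ∉ span ℝ (Set.range C) := fun h => by
    simpa [huw] using inner_eq_zero_of_mem_span hCw h
  have hw2 : ‖w‖ ^ 2 ≠ 0 := by positivity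
  set w' := (‖w‖ ^ 2)⁻¹ • w
  obtain ⟨t, ht⟩ : ∃ t : Fin m → ℝ, ∑ i, t i • C i = u - w' := by
    refine (mem_span_range_iff_exists_fun ℝ).mp
      (mem_span_of_mem_span_insert_of_inner_eq_zero (u := u) hCw (by simp [huw]) ?_ ?_)
    · rw [← Fin.range_snoc, ← span_real_zspan, ← hsnoc, span_real_zspan]
      exact sub_mem (span_real_zspan B ▸ subset_span hu)
        (smul_mem _ _ (mem_dualSet_zspan_iff.mp hwdual).1)
    · rw [inner_sub_right, huw, real_inner_smul_right, real_inner_self_eq_norm_sq,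
        inv_mul_cancel₀ hw2, sub_self]
  have hw'C : ∀ i, ⟪w', C i⟫ = 0 := fun i => by
    rw [real_inner_smul_left, hCw _ ⟨i, rfl⟩, mul_zero]
  rw [det_gram_eq_of_zspan_eq hB (hC.finSnoc hu_notMem) hsnoc,
    show u = w' + ∑ i, t i • C i by rw [ht]; abel, det_gram_snoc_add_sum_smul,
    det_gram_snoc_of_forall_inner_eq_zero C hw'C, norm_smul, norm_inv, norm_pow, norm_norm]
  field_simp

end Lattice

end EuclideanLattice

open EuclideanLattice

theorem stmt6 {d n : ℕ} (hn : 2 ≤ n) (L : Set (EuclideanSpace ℝ (Fin d)))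
    (B : Fin n → EuclideanSpace ℝ (Fin d)) (hB : LinearIndependent ℝ B) (hL : L = zspan B)
    (w : EuclideanSpace ℝ (Fin d)) (hw0 : w ≠ 0) (hwdual : w ∈ dualSet L)
    (hwprim : {x | ∃ z : ℤ, x = (z : ℝ) • w} =
      dualSet L ∩ (Submodule.span ℝ ({w} : Set (EuclideanSpace ℝ (Fin d))) : Set (EuclideanSpace ℝ (Fin d))))
    (γ₁ γ₂ : ℝ) (hγ₁ : 0 < γ₁) (hγ₂ : 0 < γ₂)
    (hwshort : ∀ D : Fin n → EuclideanSpace ℝ (Fin d), LinearIndependent ℝ D → dualSet L = zspan D →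
      ‖w‖ ≤ γ₂ * gramDet D ^ ((1 : ℝ) / (n : ℝ)))
    (y : EuclideanSpace ℝ (Fin d))
    (hrank : IsLattice (L ∩ ((Submodule.span ℝ ({w} : Set (EuclideanSpace ℝ (Fin d))))ᗮ : Set (EuclideanSpace ℝ (Fin d)))) (n - 1))
    (hyshort : ∀ C : Fin (n - 1) → EuclideanSpace ℝ (Fin d), LinearIndependent ℝ C →
      L ∩ ((Submodule.span ℝ ({w} : Set (EuclideanSpace ℝ (Fin d))))ᗮ : Set (EuclideanSpace ℝ (Fin d))) = zspan C →
      ‖y‖ ≤ γ₁ * gramDet C ^ ((1 : ℝ) / ((n : ℝ) - 1))) :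
    ‖y‖ ≤ γ₁ * γ₂ ^ ((1 : ℝ) / ((n : ℝ) - 1)) * gramDet B ^ ((1 : ℝ) / (n : ℝ)) := by
  subst hL
  obtain ⟨C, hC, hBC⟩ := hrank
  have hdetB := det_gram_pos hB
  have hdetDual : gramDet (dualBasis B) = (gramDet B)⁻¹ := by
    rw [gramDet_eq_sqrt_det_gram, gramDet_eq_sqrt_det_gram, det_gram_dualBasis hB, Real.sqrt_inv]
  have hdetC : gramDet C = gramDet B * ‖w‖ := by
    rw [gramDet_eq_sqrt_det_gram, gramDet_eq_sqrt_det_gram,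
      det_gram_eq_mul_norm_sq_of_zspan_eq_inter (by omega) hB hC hw0 hwdual hwprim hBC,
      Real.sqrt_mul hdetB.le, Real.sqrt_sq (norm_nonneg w)]
  have hw := hwshort _ (linearIndependent_dualBasis hB) (dualSet_zspan hB)
  rw [hdetDual] at hw
  calc ‖y‖ ≤ γ₁ * (gramDet B * ‖w‖) ^ (1 / ((n : ℝ) - 1)) := hdetC ▸ hyshort C hC hBC
    _ ≤ γ₁ * (γ₂ ^ (1 / ((n : ℝ) - 1)) * gramDet B ^ (1 / (n : ℝ))) := by
        gcongr
        exact Real.mul_rpow_one_div_sub_one_le (by norm_cast) hγ₂ (Real.sqrt_pos.mpr hdetB)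
          (norm_nonneg w) hw
    _ = γ₁ * γ₂ ^ ((1 : ℝ) / ((n : ℝ) - 1)) * gramDet B ^ ((1 : ℝ) / (n : ℝ)) := by ring
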